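/- For a 2DPPDA on a fixed input w, consider runs starting from a configuration (q, (Z, i), j) whose stack consists of the single entry (Z, i). Whether there exists a run from this configuration that eventually pops Z (emptying the stack), the state p in which the pop occurs, the direction of that final pop move, and — when that direction is not ↑ — the head position after the pop, are all independent of the tag i; when the final pop direction is ↑, the head position after the pop equals i. In particular, the pop direction d_{q,j}(Z) does not depend on the position i at which Z was pushed. -/
import Mathlib


/-! ### Deterministic pointer pushdown automata -/

/-- Tape symbols: the input letters plus the end markers `▷` and `◁`. -/
inductive TSym (A : Type) : Type where
  | lmark : TSym A
  | rmark : TSym A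
  | sym : A → TSym A

/-- The symbol in cell `j` of the tape `▷w◁` (cell `0` holds `▷`, cell `|w|+1` holds `◁`). -/
def tapeNth {A : Type} (w : List A) (j : ℕ) : TSym A :=
  if j = 0 then .lmark
  else
    match w[j - 1]? with
    | some a => .sym a
    | none => .rmark

/-- Head directions: move left, stay, return to the stored pointer, move right. -/
inductive Dir : Type where
  | left | down | up | right
deriving DecidableEq

/-- A (two-way) deterministic pointer pushdown automaton.  A transition
`trans q a Z = some (p, β, d)` pops `(Z, i)` when `β = []` (moving the head by `d`,
where `d = up` returns the head to the position `i` stored with `Z`), and pushes `β`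
above `Z` when `β ≠ []` (moving the head by `d`).  Moves `↑` must pop (`α = ε`),
moving left off `▷` and right off `◁` is forbidden. -/
structure DPPDA (Q A Γ : Type) : Type where
  trans : Q → TSym A → Γ → Option (Q × List Γ × Dir)
  init : Q
  Z0 : Γ
  final : Q → Bool
  up_pop : ∀ q a Z p β, trans q a Z = some (p, β, Dir.up) → β = []
  no_left_lmark : ∀ q Z p β, trans q TSym.lmark Z ≠ some (p, β, Dir.left)
  no_right_rmark : ∀ q Z p β, trans q TSym.rmark Z ≠ some (p, β, Dir.right)

/-- A configuration: state, stack of symbols tagged with the head position at which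
they were pushed (top of the stack is the head of the list), and head position. -/
structure Conf (Q Γ : Type) : Type where
  state : Q
  stack : List (Γ × ℕ)
  pos : ℕ

/-- One move of a DPPDA on input `w` (`none` when no move is possible). -/
def DPPDA.step {Q A Γ : Type} (M : DPPDA Q A Γ) (w : List A) (c : Conf Q Γ) :
    Option (Conf Q Γ) :=
  match c.stack with
  | [] => none
  | (Z, i) :: rest =>
    match M.trans c.state (tapeNth w c.pos) Z with
    | none => none
    | some (p, β, d) =>
      let j' : ℕ :=
        match d with
        | Dir.left => c.pos - 1
        | Dir.down => c.pos
        | Dir.up => i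
        | Dir.right => c.pos + 1
      match β with
      | [] => some ⟨p, rest, j'⟩
      | X :: Xs => some ⟨p, ((X :: Xs).map fun Y => (Y, j')) ++ (Z, i) :: rest, j'⟩

/-- Reachability between configurations. -/
def DPPDA.Reaches {Q A Γ : Type} (M : DPPDA Q A Γ) (w : List A) :
    Conf Q Γ → Conf Q Γ → Prop :=
  Relation.ReflTransGen (fun c c' => M.step w c = some c')

/-- Acceptance: from the initial configuration `(q₀, (Z₀, 0), 0)` the automaton
reaches the right end marker with empty stack in a final state. -/
def DPPDA.Accepts {Q A Γ : Type} (M : DPPDA Q A Γ) (w : List A) : Prop :=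
  ∃ qf : Q, M.final qf = true ∧
    M.Reaches w ⟨M.init, [(M.Z0, 0)], 0⟩ ⟨qf, [], w.length + 1⟩

/-- A one-way DPPDA: moves with direction `←` are forbidden. -/
def DPPDA.OneWay {Q A Γ : Type} (M : DPPDA Q A Γ) : Prop :=
  ∀ q a Z p β, M.trans q a Z ≠ some (p, β, Dir.left)

/-- `EndsPop M w q Z t i p d j`: the run of `M` on `w` starting from the
configuration `(q, (Z, t), i)` (a stack consisting of the single entry `Z` tagged
with `t`, head at `i`) eventually pops `Z` — emptying the stack — in state `p`,
via a final pop move with direction `d`, leaving the head at position `j`. -/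
def EndsPop {Q A Γ : Type} (M : DPPDA Q A Γ) (w : List A) (q : Q) (Z : Γ)
    (t i : ℕ) (p : Q) (d : Dir) (j : ℕ) : Prop :=
  ∃ c : Conf Q Γ, M.Reaches w ⟨q, [(Z, t)], i⟩ c ∧ c.stack = [(Z, t)] ∧
    M.trans c.state (tapeNth w c.pos) Z = some (p, ([] : List Γ), d) ∧
    M.step w c = some ⟨p, [], j⟩

private lemma step_stack_ne_nil {Q A Γ : Type} (M : DPPDA Q A Γ) (w : List A)
    {c c' : Conf Q Γ} (h : M.step w c = some c') : c.stack ≠ [] := by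
  intro hnil
  simp [DPPDA.step, hnil] at h

private lemma reaches_retag {Q A Γ : Type} (M : DPPDA Q A Γ) (w : List A)
    (q : Q) (Z : Γ) (t t' i : ℕ) :
    ∀ c : Conf Q Γ, M.Reaches w ⟨q, [(Z, t)], i⟩ c → c.stack ≠ [] →
      ∃ front, c.stack = front ++ [(Z, t)] ∧
        M.Reaches w ⟨q, [(Z, t')], i⟩ ⟨c.state, front ++ [(Z, t')], c.pos⟩ := by
  intro c hc
  induction hc with
  | refl => exact fun _ => ⟨[], rfl, Relation.ReflTransGen.refl⟩
  | @tail b c hab hbc ih =>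
    intro hcne
    have hbne : b.stack ≠ [] := step_stack_ne_nil M w hbc
    obtain ⟨front, hbs, hreach⟩ := ih hbne
    match front, hbs with
    | [], hbs =>
      rw [DPPDA.step, hbs] at hbc
      simp only [List.nil_append] at hbc
      match htrans : M.trans b.state (tapeNth w b.pos) Z with
      | none => rw [htrans] at hbc; simp at hbc
      | some (p₁, [], d₁) =>
        rw [htrans] at hbc
        simp only [Option.some.injEq] at hbc
        exact absurd (congrArg Conf.stack hbc.symm) (by simpa using hcne)
      | some (p₁, X :: Xs, d₁) =>
        have hd : d₁ ≠ Dir.up := by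
          intro hd; subst hd
          exact (List.cons_ne_nil X Xs) (M.up_pop _ _ _ _ _ htrans)
        rw [htrans] at hbc
        simp only [Option.some.injEq] at hbc
        subst hbc
        refine ⟨(X :: Xs).map (fun Y => (Y, _)), rfl, hreach.tail ?_⟩
        show M.step w ⟨b.state, [] ++ [(Z, t')], b.pos⟩ = _
        rw [DPPDA.step]
        simp only [List.nil_append]
        rw [htrans]
        cases d₁ with
        | up => exact absurd rfl hd
        | left => rfl
        | down => rfl
        | right => rfl
    | (Y, iY) :: f', hbs =>
      rw [DPPDA.step, hbs] at hbc
      simp only [List.cons_append] at hbc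
      match htrans : M.trans b.state (tapeNth w b.pos) Y with
      | none => rw [htrans] at hbc; simp at hbc
      | some (p₁, [], d₁) =>
        rw [htrans] at hbc
        simp only [Option.some.injEq] at hbc
        subst hbc
        refine ⟨f', rfl, hreach.tail ?_⟩
        show M.step w ⟨b.state, ((Y, iY) :: f') ++ [(Z, t')], b.pos⟩ = _
        rw [DPPDA.step]
        simp only [List.cons_append]
        rw [htrans]
      | some (p₁, X :: Xs, d₁) =>
        rw [htrans] at hbc
        simp only [Option.some.injEq] at hbc
        subst hbc
        refine ⟨(X :: Xs).map (fun W => (W, (match d₁ with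
            | Dir.left => b.pos - 1
            | Dir.down => b.pos
            | Dir.up => iY
            | Dir.right => b.pos + 1 : ℕ))) ++ (Y, iY) :: f', by simp, hreach.tail ?_⟩
        show M.step w ⟨b.state, ((Y, iY) :: f') ++ [(Z, t')], b.pos⟩ = _
        rw [DPPDA.step]
        simp only [List.cons_append]
        rw [htrans]
        simp

/-- For a 2DPPDA on a fixed input `w`, consider runs started at
`(q, (Z, t), j)` with a singleton stack.  Whether the run eventually pops `Z`
(emptying the stack), the state `p` of the final pop, and its direction `d`, are all
independent of the tag `t`; if `d ≠ ↑` the head position after the pop is also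
independent of the tag, and if `d = ↑` the head position after the pop equals the
tag.  In particular the pop direction `d_{q,j}(Z)` does not depend on the position
at which `Z` was pushed. -/
theorem dppda_pop_independent_of_tag {Q A Γ : Type} (M : DPPDA Q A Γ) (w : List A)
    (q p : Q) (Z : Γ) (j : ℕ) (d : Dir) (t t' k : ℕ)
    (h : EndsPop M w q Z t j p d k) :
    ∃ k', EndsPop M w q Z t' j p d k' ∧
      (d = Dir.up → k = t ∧ k' = t') ∧ (d ≠ Dir.up → k' = k) := by
  obtain ⟨c, hreach, hcs, htrans, hstep⟩ := h
  obtain ⟨front, hfs, hreach'⟩ :=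
    reaches_retag M w q Z t t' j c hreach (by rw [hcs]; simp)
  have hfront : front = [] := by
    rcases front with _ | ⟨x, xs⟩
    · rfl
    · rw [hcs] at hfs
      have := congrArg List.length hfs
      simp at this
  subst hfront
  simp only [List.nil_append] at hreach'
  rw [DPPDA.step, hcs] at hstep
  simp only [htrans] at hstep
  cases d with
  | up =>
    have hk : t = k := congrArg Conf.pos (Option.some.inj hstep)
    refine ⟨t', ⟨⟨c.state, [(Z, t')], c.pos⟩, hreach', rfl, htrans, ?_⟩,
      fun _ => ⟨hk.symm, rfl⟩, fun hd => absurd rfl hd⟩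
    rw [DPPDA.step]
    simp only [htrans]
  | left =>
    have hk : c.pos - 1 = k := congrArg Conf.pos (Option.some.inj hstep)
    refine ⟨k, ⟨⟨c.state, [(Z, t')], c.pos⟩, hreach', rfl, htrans, ?_⟩,
      fun hd => absurd hd (by simp), fun _ => rfl⟩
    subst hk
    rw [DPPDA.step]
    simp only [htrans]
  | down =>
    have hk : c.pos = k := congrArg Conf.pos (Option.some.inj hstep)
    refine ⟨k, ⟨⟨c.state, [(Z, t')], c.pos⟩, hreach', rfl, htrans, ?_⟩,
      fun hd => absurd hd (by simp), fun _ => rfl⟩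
    subst hk
    rw [DPPDA.step]
    simp only [htrans]
  | right =>
    have hk : c.pos + 1 = k := congrArg Conf.pos (Option.some.inj hstep)
    refine ⟨k, ⟨⟨c.state, [(Z, t')], c.pos⟩, hreach', rfl, htrans, ?_⟩,
      fun hd => absurd hd (by simp), fun _ => rfl⟩
    subst hk
    rw [DPPDA.step]
    simp only [htrans]
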